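/- arXiv:1305.6777 — 4 statements merged into one kernel-verified Lean document; each statement's English description precedes it below -/
import Mathlib

section
/- Let a, b, S > 0. If t, s > 0 satisfy t ≥ aS(t+s)^{1/3} and s ≥ bS²(t+s)^{2/3}, then t ≥ t₀ and s ≥ s₀, where (t₀, s₀) is the unique positive solution of the system t = aS(t+s)^{1/3}, s = bS²(t+s)^{2/3}. -/
/-! With `v = S (t+s)^{1/3}` the hypotheses read `a v ≤ t` and `b v² ≤ s`; adding them and using
`v³ = S³ (t+s)` gives the quadratic inequality `v² ≥ b S³ v + a S³`, so `v` is at least the positive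
root `v₀` of `x² = b S³ x + a S³`. Then `t ≥ a v₀ = t₀` and `s ≥ b v₀² = s₀`. -/

noncomputable def posRoot (p q : ℝ) : ℝ := (p + √(p ^ 2 + 4 * q)) / 2

lemma posRoot_nonneg {p q : ℝ} (hq : 0 ≤ q) : 0 ≤ posRoot p q := by
  have : |p| ≤ √(p ^ 2 + 4 * q) := by
    rw [← Real.sqrt_sq_eq_abs]
    exact Real.sqrt_le_sqrt (by linarith)
  unfold posRoot
  linarith [neg_abs_le p]

lemma posRoot_sq {p q : ℝ} (h : 0 ≤ p ^ 2 + 4 * q) :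
    posRoot p q ^ 2 = p * posRoot p q + q := by
  unfold posRoot
  linear_combination (Real.sq_sqrt h) / 4

lemma posRoot_le_of_mul_add_le_sq {p q x : ℝ} (hq : 0 ≤ q) (hx : 0 < x)
    (h : p * x + q ≤ x ^ 2) : posRoot p q ≤ x := by
  have hpx : p ≤ x := le_of_mul_le_mul_right (by nlinarith) hx
  have hsqrt : √(p ^ 2 + 4 * q) ≤ 2 * x - p :=
    Real.sqrt_le_iff.mpr ⟨by linarith, by nlinarith⟩
  unfold posRoot
  linarith

/-- If `t ≥ aS(t+s)^{1/3}` and `s ≥ bS²(t+s)^{2/3}` with `t, s > 0`, then `t ≥ t₀` and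
`s ≥ s₀`, where `(t₀, s₀)` is the explicit positive solution of the associated system. -/
theorem stmt_2 (a b S : ℝ) (ha : 0 < a) (hb : 0 < b) (hS : 0 < S)
    (t s : ℝ) (ht : 0 < t) (hs : 0 < s)
    (h1 : a * S * (t + s) ^ ((1 : ℝ) / 3) ≤ t)
    (h2 : b * S ^ 2 * (t + s) ^ ((2 : ℝ) / 3) ≤ s) :
    (a * b * S ^ 3 + a * Real.sqrt (b ^ 2 * S ^ 6 + 4 * a * S ^ 3)) / 2 ≤ t ∧
    (b ^ 3 * S ^ 6 + 2 * a * b * S ^ 3 +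
      b ^ 2 * S ^ 3 * Real.sqrt (b ^ 2 * S ^ 6 + 4 * a * S ^ 3)) / 2 ≤ s := by
  have hts : 0 ≤ t + s := by positivity
  set u := (t + s) ^ ((1 : ℝ) / 3)
  have hu3 : u ^ 3 = t + s := by
    rw [← Real.rpow_mul_natCast hts]; norm_num
  have hu2 : (t + s) ^ ((2 : ℝ) / 3) = u ^ 2 := by
    rw [← Real.rpow_mul_natCast hts]; norm_num
  set v := S * u
  have hv : 0 < v := by positivity
  have ht' : a * v ≤ t := by linarith
  have hs' : b * v ^ 2 ≤ s := by linarith [hu2 ▸ h2]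
  have hquad : b * S ^ 3 * v + a * S ^ 3 ≤ v ^ 2 := by
    refine le_of_mul_le_mul_right ?_ hv
    calc (b * S ^ 3 * v + a * S ^ 3) * v = S ^ 3 * (a * v + b * v ^ 2) := by ring
      _ ≤ S ^ 3 * (t + s) := by gcongr
      _ = v ^ 2 * v := by rw [← hu3]; ring
  have hroot : posRoot (b * S ^ 3) (a * S ^ 3) ≤ v :=
    posRoot_le_of_mul_add_le_sq (by positivity) hv hquad
  have hdisc : (b * S ^ 3) ^ 2 + 4 * (a * S ^ 3) = b ^ 2 * S ^ 6 + 4 * a * S ^ 3 := by ring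
  constructor
  · calc _ = a * posRoot (b * S ^ 3) (a * S ^ 3) := by rw [posRoot, hdisc]; ring
      _ ≤ a * v := by gcongr
      _ ≤ t := ht'
  · calc _ = b * posRoot (b * S ^ 3) (a * S ^ 3) ^ 2 := by
          rw [posRoot_sq (by positivity), posRoot, hdisc]; ring
      _ ≤ b * v ^ 2 := by gcongr; exact posRoot_nonneg (by positivity)
      _ ≤ s := hs'
end

section
/- Let a, b, S > 0. Then c* := (abS³)/4 + (b³S⁶)/24 + (b²S⁴ + 4aS)^{3/2}/24 is strictly greater than c₁ := (1/3)(aS)^{3/2} + (1/12)b³S⁶. -/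
/-!
With `x = b²S⁴` and `y = 4aS` we have `x^{3/2} = b³S⁶` and `y^{3/2} = 8(aS)^{3/2}`, so
superadditivity of `t ↦ t^{3/2}` on `[0, ∞)` gives `(x + y)^{3/2} ≥ b³S⁶ + 8(aS)^{3/2}`.
Substituting this into `c*` leaves `c* - c₁ ≥ abS³/4 > 0`.
-/

namespace Real

lemma sq_rpow_three_halves {t : ℝ} (ht : 0 ≤ t) : (t ^ 2) ^ ((3 : ℝ) / 2) = t ^ 3 := by
  rw [← rpow_natCast_mul ht]
  norm_num

lemma four_mul_rpow_three_halves {t : ℝ} (ht : 0 ≤ t) :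
    (4 * t) ^ ((3 : ℝ) / 2) = 8 * t ^ ((3 : ℝ) / 2) := by
  rw [mul_rpow (by norm_num) ht, show (4 : ℝ) = 2 ^ 2 by norm_num,
    sq_rpow_three_halves (by norm_num)]
  norm_num

end Real

/-- The critical level `c* = abS³/4 + b³S⁶/24 + (b²S⁴+4aS)^{3/2}/24` is strictly greater
than `c₁ = (1/3)(aS)^{3/2} + (1/12)b³S⁶`. -/
theorem stmt_5 (a b S : ℝ) (ha : 0 < a) (hb : 0 < b) (hS : 0 < S) :
    (1 / 3) * (a * S) ^ ((3 : ℝ) / 2) + (1 / 12) * b ^ 3 * S ^ 6 <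
    a * b * S ^ 3 / 4 + b ^ 3 * S ^ 6 / 24 +
      (b ^ 2 * S ^ 4 + 4 * a * S) ^ ((3 : ℝ) / 2) / 24 := by
  have hx : (b ^ 2 * S ^ 4) ^ ((3 : ℝ) / 2) = b ^ 3 * S ^ 6 := by
    rw [show b ^ 2 * S ^ 4 = (b * S ^ 2) ^ 2 by ring, Real.sq_rpow_three_halves (by positivity)]
    ring
  have hy : (4 * a * S) ^ ((3 : ℝ) / 2) = 8 * (a * S) ^ ((3 : ℝ) / 2) := by
    rw [mul_assoc, Real.four_mul_rpow_three_halves (by positivity)]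
  have superadd := Real.add_rpow_le_rpow_add (p := (3 : ℝ) / 2)
    (by positivity : 0 ≤ b ^ 2 * S ^ 4) (by positivity : 0 ≤ 4 * a * S) (by norm_num)
  rw [hx, hy] at superadd
  linarith [show 0 < a * b * S ^ 3 by positivity]
end

section
/- Let f : ℝ → ℝ be continuous with f(t) = 0 for t ≤ 0, and suppose f(t)/t³ is strictly increasing on (0, ∞). Then the function s ↦ (1/4)f(s)s − F(s) is strictly increasing on (0, ∞), where F(s) = ∫₀ˢ f(τ)dτ. -/
/-!
For `0 < a < b` write `F b - F a = ∫ a..b, f`. On `[a, b]` monotonicity of `f t / t ^ n` gives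
`f t ≤ (f b / b ^ n) t ^ n`, so `∫ a..b, f ≤ (f b / b ^ n) (b ^ (n+1) - a ^ (n+1)) / (n+1)`.
Hence the increment of `f s * s / (n+1) - F s` from `a` to `b` is at least
`a ^ (n+1) / (n+1) * (f b / b ^ n - f a / a ^ n) > 0`.
-/

open MeasureTheory Set

theorem intervalIntegral_le_of_div_pow_le {f : ℝ → ℝ} {a b : ℝ} (n : ℕ) (ha : 0 < a)
    (hab : a ≤ b) (hf : IntervalIntegrable f volume a b)
    (hle : ∀ t ∈ Icc a b, f t / t ^ n ≤ f b / b ^ n) :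
    ∫ t in a..b, f t ≤ f b / b ^ n * ((b ^ (n + 1) - a ^ (n + 1)) / (n + 1)) := by
  rw [← integral_pow, ← intervalIntegral.integral_const_mul]
  refine intervalIntegral.integral_mono_on hab hf
    ((continuous_const.mul (continuous_pow n)).intervalIntegrable _ _) fun t ht => ?_
  have ht_pow : 0 < t ^ n := pow_pos (ha.trans_le ht.1) n
  calc f t = f t / t ^ n * t ^ n := (div_mul_cancel₀ _ ht_pow.ne').symm
    _ ≤ f b / b ^ n * t ^ n := mul_le_mul_of_nonneg_right (hle t ht) ht_pow.le

theorem strictMonoOn_mul_div_succ_sub_integral {f : ℝ → ℝ} (n : ℕ) (hf : LocallyIntegrable f)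
    (hmono : StrictMonoOn (fun t => f t / t ^ n) (Ioi 0)) :
    StrictMonoOn (fun s => (1 / (n + 1)) * f s * s - ∫ τ in (0 : ℝ)..s, f τ) (Ioi 0) := by
  intro a (ha : 0 < a) b (hb : 0 < b) hab
  have hint : ∀ x y : ℝ, IntervalIntegrable f volume x y := fun x y =>
    (hf.integrableOn_isCompact isCompact_uIcc).intervalIntegrable
  have hsplit := intervalIntegral.integral_add_adjacent_intervals (hint 0 a) (hint a b)
  have hbound := intervalIntegral_le_of_div_pow_le n ha hab.le (hint a b) fun t ht =>
    hmono.monotoneOn (ha.trans_le ht.1) hb ht.2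
  have hscale : ∀ x ≠ 0, 1 / (n + 1) * f x * x = f x / x ^ n * x ^ (n + 1) / (n + 1) := by
    intro x hx
    field_simp
    ring
  have hgap : f a / a ^ n * a ^ (n + 1) / (n + 1) < f b / b ^ n * a ^ (n + 1) / (n + 1) := by
    gcongr ?_ * _ / _
    exact hmono ha hb hab
  have hexpand : f b / b ^ n * ((b ^ (n + 1) - a ^ (n + 1)) / (n + 1))
      = f b / b ^ n * b ^ (n + 1) / (n + 1) - f b / b ^ n * a ^ (n + 1) / (n + 1) := by ring
  simp only [← hsplit, hscale a ha.ne', hscale b hb.ne']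
  linarith

theorem stmt_7_general (f : ℝ → ℝ) (hf : Continuous f)
    (hmono : StrictMonoOn (fun t => f t / t ^ 3) (Set.Ioi (0 : ℝ))) :
    StrictMonoOn (fun s => (1 / 4) * f s * s - ∫ τ in (0 : ℝ)..s, f τ)
      (Set.Ioi (0 : ℝ)) := by
  have := strictMonoOn_mul_div_succ_sub_integral 3 hf.locallyIntegrable hmono
  norm_num at this
  exact this

/-- If `f(t)/t³` is strictly increasing on `(0,∞)`, then `s ↦ (1/4)f(s)s - F(s)` is
strictly increasing on `(0,∞)`. -/
theorem stmt_7 (f : ℝ → ℝ) (hf : Continuous f) (hf0 : ∀ t ≤ (0 : ℝ), f t = 0)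
    (hmono : StrictMonoOn (fun t => f t / t ^ 3) (Set.Ioi (0 : ℝ))) :
    StrictMonoOn (fun s => (1 / 4) * f s * s - ∫ τ in (0 : ℝ)..s, f τ)
      (Set.Ioi (0 : ℝ)) :=
  stmt_7_general f hf hmono
end

section
/- Let a, b, S > 0 and let l₁, l₂ > 0 satisfy l₁ ≥ aS(l₁+l₂)^{1/3} and l₂ ≥ bS²(l₁+l₂)^{2/3}. Then (1/3)l₁ + (1/12)l₂ ≥ (abS³)/4 + (b³S⁶)/24 + (b²S⁴+4aS)^{3/2}/24. -/
/-- If `l₁ ≥ aS(l₁+l₂)^{1/3}` and `l₂ ≥ bS²(l₁+l₂)^{2/3}` with `l₁, l₂ > 0`, then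
`(1/3)l₁ + (1/12)l₂ ≥ abS³/4 + b³S⁶/24 + (b²S⁴+4aS)^{3/2}/24`. -/
theorem stmt_12 (a b S l₁ l₂ : ℝ) (ha : 0 < a) (hb : 0 < b) (hS : 0 < S)
    (h₁ : 0 < l₁) (h₂ : 0 < l₂)
    (hineq₁ : a * S * (l₁ + l₂) ^ ((1 : ℝ) / 3) ≤ l₁)
    (hineq₂ : b * S ^ 2 * (l₁ + l₂) ^ ((2 : ℝ) / 3) ≤ l₂) :
    a * b * S ^ 3 / 4 + b ^ 3 * S ^ 6 / 24 +
      (b ^ 2 * S ^ 4 + 4 * a * S) ^ ((3 : ℝ) / 2) / 24 ≤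
    (1 / 3) * l₁ + (1 / 12) * l₂ := by
  have hu : (0:ℝ) < l₁ + l₂ := by linarith
  set t : ℝ := (l₁ + l₂) ^ ((1 : ℝ) / 3) with ht
  have htpos : 0 < t := Real.rpow_pos_of_pos hu _
  have ht3 : t ^ (3:ℕ) = l₁ + l₂ := by
    rw [ht, ← Real.rpow_natCast ((l₁+l₂) ^ ((1:ℝ)/3)) 3, ← Real.rpow_mul hu.le]
    norm_num
  have ht2 : (l₁ + l₂) ^ ((2:ℝ)/3) = t ^ (2:ℕ) := by
    rw [ht, ← Real.rpow_natCast ((l₁+l₂) ^ ((1:ℝ)/3)) 2, ← Real.rpow_mul hu.le]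
    norm_num
  rw [ht2] at hineq₂
  set D : ℝ := b ^ 2 * S ^ 4 + 4 * a * S with hD
  have hDpos : 0 < D := by positivity
  set s : ℝ := D ^ ((1:ℝ)/2) with hs
  have hspos : 0 < s := Real.rpow_pos_of_pos hDpos _
  have hs2 : s ^ (2:ℕ) = D := by
    rw [hs, ← Real.rpow_natCast (D ^ ((1:ℝ)/2)) 2, ← Real.rpow_mul hDpos.le]
    norm_num
  have hD32 : D ^ ((3:ℝ)/2) = s ^ (3:ℕ) := by
    rw [hs, ← Real.rpow_natCast (D ^ ((1:ℝ)/2)) 3, ← Real.rpow_mul hDpos.le]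
    norm_num
  rw [hD32]
  -- t² - bS² t - aS ≥ 0
  have hkey : b * S ^ 2 * t + a * S ≤ t ^ 2 := by
    have h := ht3
    nlinarith [mul_pos htpos htpos, hineq₁, hineq₂]
  have htb : b * S ^ 2 < t := by nlinarith [sq_nonneg t, mul_pos (mul_pos hb (pow_pos hS 2)) htpos]
  have ht0 : b * S ^ 2 + s ≤ 2 * t := by
    nlinarith [hs2, hkey, sq_nonneg (2*t - b*S^2 - s)]
  have hcube : (b * S ^ 2 + s) ^ 3 ≤ (2 * t) ^ 3 := by
    have h0 : (0:ℝ) ≤ b * S ^ 2 + s := by positivity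
    exact pow_le_pow_left₀ h0 ht0 3
  nlinarith [hcube, hineq₁, hineq₂, ht3, hs2, mul_pos ha hS, mul_pos hspos hspos]
end
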